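/- For integers m >= 1 and 1 <= n <= m-1 (with m-1 >= n), the polynomial B(m,n;q) = [2m]![n]!/([m]![m-n]![2n]!) satisfies the three-term recursion B(m,n;q) = q^{2m-2n} B(m-1,n-1;q) + (1 + q^m + q^{m-n} + q^{2m+n-1}) B(m-1,n;q). -/

import Mathlib

open Finset

/-- The `q`-factorial `[n]! = [1][2]⋯[n]`, as a rational function in `q`. -/
noncomputable def qFact (n : ℕ) : RatFunc ℚ :=
  ∏ i ∈ range n, ∑ j ∈ range (i + 1), RatFunc.X ^ j

/-- `B(m,n;q) = [2m]![n]!/([m]![m-n]![2n]!)`. -/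
noncomputable def Bq (m n : ℕ) : RatFunc ℚ :=
  qFact (2 * m) * qFact n / (qFact m * qFact (m - n) * qFact (2 * n))

/-!
Both `B(m-1,n-1)` and `B(m-1,n)` are obtained from `B(m,n)` by dividing off a few `q`-integers
`[k] = 1 + q + ⋯ + q^(k-1)`, so after clearing denominators the recursion becomes an identity
between products of three `q`-integers. Writing `[k] = (q^k - 1)/(q - 1)`, that identity is a
polynomial identity in `q`, `q^m` and `q^n`.
-/

def qInt {R : Type*} [Semiring R] (q : R) (k : ℕ) : R :=
  ∑ j ∈ range k, q ^ j

theorem qInt_mul_identity {K : Type*} [Field K] {q : K} (hq : q ≠ 1) {m n : ℕ} (h : n ≤ m) :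
    qInt q (2 * m + 1) * qInt q (2 * m + 2) * qInt q (n + 1) =
      q ^ (2 * (m - n)) * (qInt q (m + 1) * qInt q (2 * n + 1) * qInt q (2 * n + 2)) +
      (1 + q ^ (m + 1) + q ^ (m - n) + q ^ (2 * m + n + 2)) *
        (qInt q (m + 1) * (qInt q (n + 1) * qInt q (m - n))) := by
  obtain ⟨c, rfl⟩ := Nat.exists_eq_add_of_le h
  have hq' : q - 1 ≠ 0 := sub_ne_zero.mpr hq
  simp only [Nat.add_sub_cancel_left, qInt, geom_sum_eq hq]
  field_simp
  ring

open RatFunc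

theorem X_ne_one : (X : RatFunc ℚ) ≠ 1 := by
  intro h
  have := congrArg intDegree h
  simp at this

theorem qInt_X_succ_ne_zero (k : ℕ) : qInt (X : RatFunc ℚ) (k + 1) ≠ 0 := by
  have hmap : qInt (X : RatFunc ℚ) (k + 1) =
      algebraMap (Polynomial ℚ) (RatFunc ℚ) (∑ j ∈ range (k + 1), Polynomial.X ^ j) := by
    simp [qInt, map_sum, map_pow, algebraMap_X]
  rw [hmap]
  refine algebraMap_ne_zero fun h0 => ?_
  have := congrArg (Polynomial.eval 1) h0
  simp only [Polynomial.eval_geom_sum, one_pow, sum_const, card_range, nsmul_eq_mul, mul_one,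
    Polynomial.eval_zero] at this
  exact Nat.cast_ne_zero.mpr k.succ_ne_zero this

theorem qFact_succ (n : ℕ) : qFact (n + 1) = qFact n * qInt X (n + 1) :=
  prod_range_succ _ _

theorem qFact_ne_zero (n : ℕ) : qFact n ≠ 0 :=
  prod_ne_zero_iff.mpr fun i _ => qInt_X_succ_ne_zero i

theorem Bq_succ_succ_mul (m n : ℕ) :
    Bq (m + 1) (n + 1) * (qInt X (m + 1) * qInt X (2 * n + 1) * qInt X (2 * n + 2)) =
      Bq m n * (qInt X (2 * m + 1) * qInt X (2 * m + 2) * qInt X (n + 1)) := by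
  have h2m : 2 * (m + 1) = 2 * m + 1 + 1 := by ring
  have h2n : 2 * (n + 1) = 2 * n + 1 + 1 := by ring
  rw [Bq, Bq, h2m, h2n, Nat.add_sub_add_right, qFact_succ (2 * m + 1), qFact_succ (2 * m),
    qFact_succ (2 * n + 1), qFact_succ (2 * n), qFact_succ m, qFact_succ n]
  field_simp [qFact_ne_zero, qInt_X_succ_ne_zero]

theorem Bq_succ_right_mul {m n : ℕ} (h : n < m) :
    Bq m (n + 1) * (qInt X (2 * n + 1) * qInt X (2 * n + 2)) =
      Bq m n * (qInt X (n + 1) * qInt X (m - n)) := by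
  obtain ⟨c, rfl⟩ := Nat.exists_eq_add_of_lt h
  rw [Bq, Bq, show n + c + 1 - n = c + 1 by omega, show n + c + 1 - (n + 1) = c by omega,
    show 2 * (n + 1) = 2 * n + 1 + 1 by ring, qFact_succ (2 * n + 1), qFact_succ (2 * n),
    qFact_succ n, qFact_succ c]
  field_simp [qFact_ne_zero, qInt_X_succ_ne_zero]

theorem Bq_three_term_recursion_general (m n : ℕ) (hn : 1 ≤ n) (hmn : n ≤ m - 1) :
    Bq m n = RatFunc.X ^ (2 * m - 2 * n) * Bq (m - 1) (n - 1) +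
      (1 + RatFunc.X ^ m + RatFunc.X ^ (m - n) + RatFunc.X ^ (2 * m + n - 1)) *
        Bq (m - 1) n := by
  obtain ⟨m, n, rfl, rfl⟩ : ∃ m' n', m = m' + 1 ∧ n = n' + 1 :=
    ⟨m - 1, n - 1, by omega, by omega⟩
  have hnm : n < m := by omega
  rw [show 2 * (m + 1) - 2 * (n + 1) = 2 * (m - n) by omega,
    show (m + 1) - (n + 1) = m - n by omega,
    show 2 * (m + 1) + (n + 1) - 1 = 2 * m + n + 2 by omega, Nat.add_sub_cancel, Nat.add_sub_cancel]
  have hD : qInt (X : RatFunc ℚ) (m + 1) * qInt X (2 * n + 1) * qInt X (2 * n + 2) ≠ 0 :=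
    mul_ne_zero (mul_ne_zero (qInt_X_succ_ne_zero _) (qInt_X_succ_ne_zero _))
      (qInt_X_succ_ne_zero _)
  refine mul_right_cancel₀ hD ?_
  linear_combination Bq_succ_succ_mul m n
    - (1 + X ^ (m + 1) + X ^ (m - n) + X ^ (2 * m + n + 2)) * qInt X (m + 1) *
      Bq_succ_right_mul hnm
    + Bq m n * qInt_mul_identity X_ne_one hnm.le

theorem Bq_three_term_recursion (m n : ℕ) (hn : 1 ≤ n) (hmn : n ≤ m - 1) (hm : 1 ≤ m) :
    Bq m n = RatFunc.X ^ (2 * m - 2 * n) * Bq (m - 1) (n - 1) +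
      (1 + RatFunc.X ^ m + RatFunc.X ^ (m - n) + RatFunc.X ^ (2 * m + n - 1)) *
        Bq (m - 1) n :=
  Bq_three_term_recursion_general m n hn hmn
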